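/- Every epimorphism from the constant sheaf k_X of a field k on a Boolean locale X, in the category of sheaves of k-vector spaces, is isomorphic to the projection k_X ≅ k_U ⊕ k_{X\U} → k_U for a unique open U. -/

import Mathlib

universe u v

/-- A presheaf of `k`-vector spaces on a Boolean locale, presented as a presheaf on
its complete Boolean frame `B`. -/
structure KPresheaf (B : Type u) [CompleteBooleanAlgebra B] (k : Type v) [Field k] where
  obj : B → Type (max u v)
  [acg : ∀ V, AddCommGroup (obj V)]
  [mod : ∀ V, Module k (obj V)]
  res : ∀ {V W : B}, V ≤ W → obj W →ₗ[k] obj V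
  res_refl : ∀ (V : B) (x : obj V), res le_rfl x = x
  res_comp : ∀ {V W Z : B} (h1 : V ≤ W) (h2 : W ≤ Z) (x : obj Z),
    res h1 (res h2 x) = res (h1.trans h2) x

attribute [instance] KPresheaf.acg KPresheaf.mod

variable {B : Type u} [CompleteBooleanAlgebra B] {k : Type v} [Field k]

/-- The sheaf condition on a Boolean locale: the presheaf carries disjoint joins to
products. -/
def KPresheaf.IsSheaf (F : KPresheaf B k) : Prop :=
  ∀ (I : Type u) (a : I → B), (Pairwise fun i j => a i ⊓ a j = ⊥) →
    Function.Bijective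
      (fun (x : F.obj (⨆ i, a i)) (i : I) => F.res (le_iSup a i) x)

/-- A morphism of presheaves of `k`-vector spaces. -/
@[ext]
structure KHom (F G : KPresheaf B k) where
  map : ∀ V : B, F.obj V →ₗ[k] G.obj V
  natural : ∀ {V W : B} (h : V ≤ W) (x : F.obj W),
    G.res h (map W x) = map V (F.res h x)

/-- Composition of morphisms of presheaves. -/
def KHom.comp {F G H : KPresheaf B k} (g : KHom G H) (f : KHom F G) : KHom F H where
  map V := (g.map V).comp (f.map V)
  natural := by
    intro V W h x
    dsimp
    rw [g.natural, f.natural]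

/-- A morphism of sheaves is an epimorphism if it is right-cancellable against
morphisms into sheaves. -/
def KEpi {F G : KPresheaf B k} (φ : KHom F G) : Prop :=
  ∀ (H : KPresheaf B k), H.IsSheaf →
    ∀ g h : KHom G H, g.comp φ = h.comp φ → g = h

/-- A morphism of sheaves is a monomorphism if it is left-cancellable against
morphisms from sheaves. -/
def KMono {F G : KPresheaf B k} (φ : KHom F G) : Prop :=
  ∀ (H : KPresheaf B k), H.IsSheaf →
    ∀ g h : KHom H F, φ.comp g = φ.comp h → g = h


open Function


/-!
Every section of `k_X` is locally a scalar multiple of the unit section `1`: such sections form a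
subsheaf containing `1`, and by the universal property a subsheaf containing `1` is everything.
Mapping `1` to the sheaf of locally constant `k`-valued functions shows that `1` vanishes on no
nonzero open. For `φ : k_X → G` let `Z` be the largest open on which `φ 1` vanishes (it exists
because in a Boolean locale every cover refines to a disjoint one with the same join). A section
equal to `c • 1` on the pieces `a` of a partition is killed by `φ` iff `a ≤ Z` whenever `c ≠ 0`,
which is also the condition for it to vanish on `Zᶜ`. Hence `ker φ = k_{X∖U}` for `U = Zᶜ`, and
testing on restrictions of `1` shows that no other `U` works.
-/

theorem exists_pairwise_disjoint_iSup_eq {α ι : Type*} [CompleteBooleanAlgebra α] (a : ι → α) :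
    ∃ b : ι → α, (∀ i, b i ≤ a i) ∧ Pairwise (Disjoint on b) ∧ ⨆ i, b i = ⨆ i, a i := by
  obtain ⟨_, _⟩ := exists_wellFoundedLT ι
  refine ⟨fun i => a i \ ⨆ j < i, a j, fun i => sdiff_le, ?_, ?_⟩
  · have hlt : ∀ i j, i < j → Disjoint (a i \ ⨆ l < i, a l) (a j \ ⨆ l < j, a l) := fun i j hij =>
      disjoint_sdiff_self_right.mono_left (sdiff_le.trans (le_iSup₂_of_le i hij le_rfl))
    intro i j hij
    rcases hij.lt_or_gt with h | h
    · exact hlt i j h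
    · exact (hlt j i h).symm
  · refine le_antisymm (iSup_mono fun i => sdiff_le) (iSup_le fun i => ?_)
    induction i using WellFoundedLT.induction with
    | _ i ih =>
      calc a i ≤ (⨆ j < i, a j) ⊔ a i \ ⨆ j < i, a j := le_sup_sdiff
        _ ≤ ⨆ i, a i \ ⨆ j < i, a j :=
          sup_le (iSup₂_le ih) (le_iSup (fun i => a i \ ⨆ j < i, a j) i)

def IsPartitionOf {α ι : Type*} [CompleteLattice α] (V : α) (p : ι → α) : Prop :=
  Pairwise (Disjoint on p) ∧ ⨆ i, p i = V

theorem isPartitionOf_unique {α ι : Type*} [CompleteLattice α] [Unique ι] (V : α) :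
    IsPartitionOf V fun _ : ι => V :=
  ⟨Subsingleton.pairwise, iSup_const⟩

namespace IsPartitionOf

variable {α ι κ : Type*} [Order.Frame α] {V : α} {p : ι → α}

theorem le (hp : IsPartitionOf V p) (i : ι) : p i ≤ V :=
  hp.2 ▸ le_iSup p i

theorem inf (hp : IsPartitionOf V p) (W : α) : IsPartitionOf (V ⊓ W) fun i => p i ⊓ W :=
  ⟨fun _ _ hij => (hp.1 hij).mono inf_le_left inf_le_left, by rw [← iSup_inf_eq, hp.2]⟩

theorem restrict (hp : IsPartitionOf V p) {W : α} (h : W ≤ V) :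
    IsPartitionOf W fun i => p i ⊓ W := by
  have := hp.inf W
  rwa [inf_eq_right.2 h] at this

theorem prod {q : κ → α} (hp : IsPartitionOf V p) (hq : IsPartitionOf V q) :
    IsPartitionOf V fun x : ι × κ => p x.1 ⊓ q x.2 := by
  refine ⟨?_, by rw [← iSup_inf_iSup, hp.2, hq.2, inf_idem]⟩
  rintro ⟨i, j⟩ ⟨i', j'⟩ hne
  by_cases hi : i = i'
  · subst hi
    exact (hq.1 fun hj => hne (congrArg (Prod.mk i) hj)).mono inf_le_right inf_le_right
  · exact (hp.1 hi).mono inf_le_left inf_le_left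

theorem sigma {κ : ι → Type*} {q : ∀ i, κ i → α} (hp : IsPartitionOf V p)
    (hq : ∀ i, IsPartitionOf (p i) (q i)) : IsPartitionOf V fun x : Σ i, κ i => q x.1 x.2 := by
  refine ⟨?_, by rw [iSup_sigma, ← hp.2]; exact iSup_congr fun i => (hq i).2⟩
  rintro ⟨i, j⟩ ⟨i', j'⟩ hne
  by_cases hi : i = i'
  · subst hi
    exact (hq i).1 fun hj => hne (congrArg (Sigma.mk i) hj)
  · exact (hp.1 hi).mono ((hq i).le j) ((hq i').le j')

theorem eq_of_le {q : ι → α} (hp : IsPartitionOf V p) (hq : IsPartitionOf V q) (hpq : p ≤ q) :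
    p = q := by
  refine funext fun i => le_antisymm (hpq i) ?_
  calc q i = ⨆ j, q i ⊓ p j := by rw [← inf_iSup_eq, hp.2, inf_eq_left.2 (hq.le i)]
    _ ≤ p i := iSup_le fun j => by
      by_cases hj : j = i
      · subst hj
        exact inf_le_right
      · exact ((hq.1 (Ne.symm hj)).mono_right (hpq j)).le_bot.trans bot_le

end IsPartitionOf

def iSupFiber {α ι κ : Type*} [CompleteLattice α] (e : ι → κ) (p : ι → α) (b : κ) : α :=
  ⨆ (i) (_ : e i = b), p i

section iSupFiber

variable {α ι κ : Type*} [Order.Frame α] {e : ι → κ} {p : ι → α}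

theorem le_iSupFiber (e : ι → κ) (p : ι → α) (i : ι) : p i ≤ iSupFiber e p (e i) :=
  le_iSup₂_of_le i rfl le_rfl

theorem iSupFiber_le_iff {q : κ → α} : iSupFiber e p ≤ q ↔ ∀ i, p i ≤ q (e i) :=
  ⟨fun h i => (le_iSupFiber e p i).trans (h _), fun h _ => iSup₂_le fun i hi => hi ▸ h i⟩

theorem iSupFiber_inf_le_iff {b : κ} {W Z : α} :
    iSupFiber e p b ⊓ W ≤ Z ↔ ∀ i, e i = b → p i ⊓ W ≤ Z := by
  simp only [iSupFiber, iSup_inf_eq, iSup_le_iff]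

theorem IsPartitionOf.iSupFiber {V : α} (hp : IsPartitionOf V p) (e : ι → κ) :
    IsPartitionOf V (iSupFiber e p) := by
  refine ⟨fun b b' hbb' => ?_, ?_⟩
  · simp only [onFun, _root_.iSupFiber, iSup_disjoint_iff, disjoint_iSup_iff]
    rintro i rfl i' rfl
    exact hp.1 fun h => hbb' (congrArg e h)
  · simp only [_root_.iSupFiber]
    rw [← hp.2, iSup_comm]
    exact iSup_congr fun i => iSup_iSup_eq_right

end iSupFiber

/-- A locally constant `k`-valued function on `V`, recorded by its level sets: `p c` is where it
takes the value `c`. -/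
def LocConstSec (k : Type v) [Field k] (V : B) : Type (max u v) :=
  {p : k → B // IsPartitionOf V p}

namespace LocConstSec

variable {V W : B}

def const (V : B) (c : k) : LocConstSec k V :=
  ⟨iSupFiber (fun _ : Unit => c) fun _ => V, (isPartitionOf_unique V).iSupFiber _⟩

instance : Zero (LocConstSec k V) := ⟨const V 0⟩

instance : Add (LocConstSec k V) :=
  ⟨fun p q => ⟨iSupFiber (fun x : k × k => x.1 + x.2) fun x => p.1 x.1 ⊓ q.1 x.2,
    (p.2.prod q.2).iSupFiber _⟩⟩

instance : Neg (LocConstSec k V) := ⟨fun p => ⟨iSupFiber Neg.neg p.1, p.2.iSupFiber _⟩⟩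

instance : SMul k (LocConstSec k V) := ⟨fun r p => ⟨iSupFiber (r * ·) p.1, p.2.iSupFiber _⟩⟩

theorem ext_of_le {p q : LocConstSec k V} (h : p.1 ≤ q.1) : p = q :=
  Subtype.ext (p.2.eq_of_le q.2 h)

theorem le_zero : V ≤ (0 : LocConstSec k V).1 0 :=
  le_iSupFiber (fun _ : Unit => (0 : k)) (fun _ => V) ()

theorem zero_le_iff {g : k → B} : (0 : LocConstSec k V).1 ≤ g ↔ V ≤ g 0 :=
  iSupFiber_le_iff.trans Unique.forall_iff

theorem zero_inf_le_iff {c : k} {A Z : B} :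
    (0 : LocConstSec k V).1 c ⊓ A ≤ Z ↔ (0 = c → V ⊓ A ≤ Z) :=
  iSupFiber_inf_le_iff.trans Unique.forall_iff

theorem le_add (p q : LocConstSec k V) (a b : k) : p.1 a ⊓ q.1 b ≤ (p + q).1 (a + b) :=
  le_iSupFiber (fun x : k × k => x.1 + x.2) (fun x => p.1 x.1 ⊓ q.1 x.2) (a, b)

theorem add_le_iff {p q : LocConstSec k V} {g : k → B} :
    (p + q).1 ≤ g ↔ ∀ a b, p.1 a ⊓ q.1 b ≤ g (a + b) :=
  iSupFiber_le_iff.trans Prod.forall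

theorem add_inf_le_iff {p q : LocConstSec k V} {c : k} {A Z : B} :
    (p + q).1 c ⊓ A ≤ Z ↔ ∀ a b, a + b = c → p.1 a ⊓ q.1 b ⊓ A ≤ Z :=
  iSupFiber_inf_le_iff.trans Prod.forall

theorem neg_inf_le_iff {p : LocConstSec k V} {c : k} {A Z : B} :
    (-p).1 c ⊓ A ≤ Z ↔ ∀ a, -a = c → p.1 a ⊓ A ≤ Z :=
  iSupFiber_inf_le_iff

theorem le_smul (r : k) (p : LocConstSec k V) (a : k) : p.1 a ≤ (r • p).1 (r * a) :=
  le_iSupFiber (r * ·) p.1 a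

theorem smul_le_iff {r : k} {p : LocConstSec k V} {g : k → B} :
    (r • p).1 ≤ g ↔ ∀ a, p.1 a ≤ g (r * a) :=
  iSupFiber_le_iff

-- By `ext_of_le` each axiom is a single inequality, checked on the pieces of the partitions.
instance : AddCommGroup (LocConstSec k V) where
  add_assoc p q r := ext_of_le <| add_le_iff.2 fun _ c => add_inf_le_iff.2 <| by
    rintro a b rfl
    rw [inf_assoc, add_assoc]
    exact (inf_le_inf_left _ (le_add q r b c)).trans (le_add _ _ _ _)
  zero_add p := ext_of_le <| add_le_iff.2 fun _ a => zero_inf_le_iff.2 <| by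
    rintro rfl
    rw [zero_add]
    exact inf_le_right
  add_zero p := ext_of_le <| add_le_iff.2 fun a _ => by
    rw [inf_comm]
    refine zero_inf_le_iff.2 ?_
    rintro rfl
    rw [add_zero]
    exact inf_le_right
  add_comm p q := ext_of_le <| add_le_iff.2 fun a b => by
    rw [inf_comm, add_comm]
    exact le_add q p b a
  neg_add_cancel p := ext_of_le <| add_le_iff.2 fun _ a => neg_inf_le_iff.2 <| by
    rintro a' rfl
    by_cases h : a' = a
    · subst h
      rw [neg_add_cancel]
      exact inf_le_left.trans ((p.2.le a').trans le_zero)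
    · exact (p.2.1 h).le_bot.trans bot_le
  nsmul := nsmulRec
  zsmul := zsmulRec

instance : Module k (LocConstSec k V) where
  one_smul p := ext_of_le <| smul_le_iff.2 fun a => by rw [one_mul]
  mul_smul r s p := ext_of_le <| smul_le_iff.2 fun a => by
    rw [mul_assoc]
    exact (le_smul s p a).trans (le_smul r _ _)
  smul_zero r := ext_of_le <| smul_le_iff.2 <| zero_le_iff.2 <| by
    rw [mul_zero]
    exact le_zero
  smul_add r p q := ext_of_le <| smul_le_iff.2 <| add_le_iff.2 fun a b => by
    rw [mul_add]
    exact (inf_le_inf (le_smul r p a) (le_smul r q b)).trans (le_add _ _ _ _)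
  add_smul r s p := ext_of_le <| smul_le_iff.2 fun a => by
    rw [add_mul]
    exact (le_inf (le_smul r p a) (le_smul s p a)).trans (le_add _ _ _ _)
  zero_smul p := ext_of_le <| smul_le_iff.2 fun a => by
    rw [zero_mul]
    exact (p.2.le a).trans le_zero

def res (h : W ≤ V) : LocConstSec k V →ₗ[k] LocConstSec k W where
  toFun p := ⟨fun c => p.1 c ⊓ W, p.2.restrict h⟩
  map_add' p q := (ext_of_le <| add_le_iff.2 fun a b =>
    le_inf ((inf_le_inf inf_le_left inf_le_left).trans (le_add p q a b))
      (inf_le_left.trans inf_le_right)).symm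
  map_smul' r p := (ext_of_le <| smul_le_iff.2 fun a => inf_le_inf_right W (le_smul r p a)).symm

theorem eq_bot_of_res_const_eq_zero {c : k} (hc : c ≠ 0) (h : W ≤ V)
    (h0 : res h (const V c) = 0) : W = ⊥ := by
  have := congrArg (fun p : LocConstSec k W => p.1 c) h0
  change (const V c).1 c ⊓ W = (const W 0).1 c at this
  simpa [const, iSupFiber, Ne.symm hc, inf_eq_right.2 h] using this

end LocConstSec

def locConstSheaf : KPresheaf B k where
  obj V := LocConstSec k V
  res h := LocConstSec.res h
  res_refl _ p := Subtype.ext (funext fun c => inf_eq_left.2 (p.2.le c))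
  res_comp h1 _ p := Subtype.ext (funext fun c => by
    change p.1 c ⊓ _ ⊓ _ = p.1 c ⊓ _
    rw [inf_assoc, inf_eq_right.2 h1])

theorem isSheaf_locConstSheaf : (locConstSheaf : KPresheaf B k).IsSheaf := by
  intro I a ha
  have hpart : IsPartitionOf (⨆ i, a i) a := ⟨fun i j hij => disjoint_iff.2 (ha hij), rfl⟩
  refine ⟨fun p q hpq => Subtype.ext (funext fun c => ?_), fun g => ?_⟩
  · have hres : ∀ i, p.1 c ⊓ a i = q.1 c ⊓ a i := fun i =>
      congrArg (fun r : LocConstSec k (a i) => r.1 c) (congrFun hpq i)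
    rw [← inf_eq_left.2 (p.2.le c), ← inf_eq_left.2 (q.2.le c), inf_iSup_eq, inf_iSup_eq,
      iSup_congr hres]
  · let glued : LocConstSec k (⨆ i, a i) :=
      ⟨iSupFiber (fun x : Σ _ : I, k => x.2) fun x => (g x.1).1 x.2,
        (hpart.sigma fun i => (g i).2).iSupFiber _⟩
    exact ⟨glued, funext fun i => (LocConstSec.ext_of_le fun c =>
      le_inf (le_iSupFiber (fun x : Σ _ : I, k => x.2) (fun x => (g x.1).1 x.2) ⟨i, c⟩)
        ((g i).2.le c)).symm⟩

def KHom.id (F : KPresheaf B k) : KHom F F :=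
  ⟨fun _ => LinearMap.id, fun _ _ => rfl⟩

namespace KPresheaf

variable (F : KPresheaf B k) {V W : B}

/-- `F` is the constant sheaf `k_X`, with unit section `one`. -/
def IsFreeOn (one : F.obj ⊤) : Prop :=
  ∀ G : KPresheaf B k, G.IsSheaf → ∀ y : G.obj ⊤, ∃! φ : KHom F G, φ.map ⊤ one = y

def ofSubmodules (S : ∀ V, Submodule k (F.obj V))
    (hS : ∀ {V W : B} (h : V ≤ W) (x : F.obj W), x ∈ S W → F.res h x ∈ S V) : KPresheaf B k where
  obj V := S V
  res h := (F.res h).restrict (hS h)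
  res_refl V x := Subtype.ext (F.res_refl V x)
  res_comp h1 h2 x := Subtype.ext (F.res_comp h1 h2 x)

def ofSubmodulesι (S : ∀ V, Submodule k (F.obj V))
    (hS : ∀ {V W : B} (h : V ≤ W) (x : F.obj W), x ∈ S W → F.res h x ∈ S V) :
    KHom (F.ofSubmodules S hS) F :=
  ⟨fun V => (S V).subtype, fun _ _ => rfl⟩

variable {F}

theorem IsSheaf.ofSubmodules (hF : F.IsSheaf) {S : ∀ V, Submodule k (F.obj V)}
    {hS : ∀ {V W : B} (h : V ≤ W) (x : F.obj W), x ∈ S W → F.res h x ∈ S V}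
    (hlocal : ∀ (I : Type u) (a : I → B), (Pairwise fun i j => a i ⊓ a j = ⊥) →
      ∀ x : F.obj (⨆ i, a i), (∀ i, F.res (le_iSup a i) x ∈ S (a i)) → x ∈ S (⨆ i, a i)) :
    (F.ofSubmodules S hS).IsSheaf := by
  intro I a ha
  refine ⟨fun x y hxy => Subtype.ext ((hF I a ha).1 (funext fun i =>
    congrArg Subtype.val (congrFun hxy i))), fun g => ?_⟩
  obtain ⟨x, hx⟩ := (hF I a ha).2 fun i => (g i).1
  have hxg : ∀ i, F.res (le_iSup a i) x = (g i).1 := congrFun hx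
  exact ⟨⟨x, hlocal I a ha x fun i => hxg i ▸ (g i).2⟩,
    funext fun i => Subtype.ext (hxg i)⟩

theorem IsFreeOn.mem_of_isSheaf_ofSubmodules {one : F.obj ⊤} (hF : F.IsSheaf)
    (hone : F.IsFreeOn one) {S : ∀ V, Submodule k (F.obj V)}
    {hS : ∀ {V W : B} (h : V ≤ W) (x : F.obj W), x ∈ S W → F.res h x ∈ S V}
    (hSheaf : (F.ofSubmodules S hS).IsSheaf) (hone_mem : one ∈ S ⊤) (x : F.obj V) : x ∈ S V := by
  obtain ⟨ψ, hψ, -⟩ := hone _ hSheaf ⟨one, hone_mem⟩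
  have hid : (F.ofSubmodulesι S hS).comp ψ = KHom.id F :=
    (hone F hF one).unique (congrArg Subtype.val hψ) rfl
  have hx : ((F.ofSubmodulesι S hS).comp ψ).map V x = x :=
    congrArg (fun φ : KHom F F => φ.map V x) hid
  rw [← hx]
  exact (ψ.map V x).2

theorem IsSheaf.eq_zero_iff (hF : F.IsSheaf) {ι : Type u} {a : ι → B} (ha : IsPartitionOf V a)
    (x : F.obj V) : x = 0 ↔ ∀ i, F.res (ha.le i) x = 0 := by
  obtain ⟨hdisj, rfl⟩ := ha
  refine ⟨fun hx i => by rw [hx, map_zero], fun hx => (hF ι a fun i j hij =>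
    (hdisj hij).eq_bot).1 (funext fun i => ?_)⟩
  change F.res _ x = F.res _ 0
  rw [hx i, map_zero]

theorem IsSheaf.eq_zero_of_bot (hF : F.IsSheaf) (x : F.obj ⊥) : x = 0 :=
  (hF.eq_zero_iff (a := PEmpty.elim) ⟨fun i => i.elim, iSup_of_empty _⟩ x).2 fun i => i.elim

def IsLocallyMultiple (s : F.obj ⊤) (x : F.obj V) : Prop :=
  ∃ (ι : Type u) (a : ι → B) (c : ι → k), IsPartitionOf V a ∧
    ∀ i (h : a i ≤ V), F.res h x = c i • F.res le_top s

theorem res_eq_smul_of_le {s : F.obj ⊤} {x : F.obj V} {A : B} {c : k} (hA : A ≤ V)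
    (hx : F.res hA x = c • F.res le_top s) (hW : W ≤ A) :
    F.res (hW.trans hA) x = c • F.res le_top s := by
  rw [← F.res_comp hW hA, hx, map_smul, F.res_comp]

theorem IsLocallyMultiple.res {s : F.obj ⊤} {x : F.obj W} (hx : F.IsLocallyMultiple s x)
    (h : V ≤ W) : F.IsLocallyMultiple s (F.res h x) := by
  obtain ⟨ι, a, c, ha, hxa⟩ := hx
  refine ⟨ι, fun i => a i ⊓ V, c, ha.restrict h, fun i _ => ?_⟩
  rw [F.res_comp]
  exact res_eq_smul_of_le (ha.le i) (hxa i _) inf_le_left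

theorem isLocallyMultiple_of_forall_res {s : F.obj ⊤} {I : Type u} {a : I → B}
    (ha : Pairwise (Disjoint on a)) (x : F.obj (⨆ i, a i))
    (hx : ∀ i, F.IsLocallyMultiple s (F.res (le_iSup a i) x)) : F.IsLocallyMultiple s x := by
  choose κ b c hb hxb using hx
  refine ⟨Σ i, κ i, fun j => b j.1 j.2, fun j => c j.1 j.2, IsPartitionOf.sigma ⟨ha, rfl⟩ hb,
    fun j _ => ?_⟩
  rw [← F.res_comp ((hb j.1).le j.2) (le_iSup a j.1)]
  exact hxb _ _ _

def locallyMultiples (s : F.obj ⊤) (V : B) : Submodule k (F.obj V) where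
  carrier := {x | F.IsLocallyMultiple s x}
  zero_mem' := ⟨PUnit, fun _ => V, fun _ => 0, isPartitionOf_unique V, fun _ _ => by
    rw [map_zero, zero_smul]⟩
  add_mem' := by
    rintro x y ⟨ι, a, c, ha, hx⟩ ⟨κ, b, d, hb, hy⟩
    refine ⟨ι × κ, fun j => a j.1 ⊓ b j.2, fun j => c j.1 + d j.2, ha.prod hb, fun j _ => ?_⟩
    rw [map_add, add_smul, res_eq_smul_of_le (ha.le _) (hx _ _) inf_le_left,
      res_eq_smul_of_le (hb.le _) (hy _ _) inf_le_right]
  smul_mem' r x := by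
    rintro ⟨ι, a, c, ha, hx⟩
    exact ⟨ι, a, fun i => r * c i, ha, fun i _ => by rw [map_smul, hx, smul_smul]⟩

theorem IsFreeOn.isLocallyMultiple {one : F.obj ⊤} (hF : F.IsSheaf) (hone : F.IsFreeOn one)
    (x : F.obj V) : F.IsLocallyMultiple one x :=
  hone.mem_of_isSheaf_ofSubmodules (S := F.locallyMultiples one) (hS := fun h _ hx => hx.res h) hF
    (hF.ofSubmodules fun _ _ ha x hx =>
      isLocallyMultiple_of_forall_res (fun _ _ hij => disjoint_iff.2 (ha hij)) x hx)
    ⟨PUnit, fun _ => ⊤, fun _ => 1, isPartitionOf_unique ⊤, fun _ _ => (one_smul k _).symm⟩ x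

theorem IsFreeOn.res_eq_zero_iff {one : F.obj ⊤} (hF : F.IsSheaf) (hone : F.IsFreeOn one) :
    F.res (le_top : W ≤ ⊤) one = 0 ↔ W = ⊥ := by
  refine ⟨fun h => ?_, fun h => by subst h; exact hF.eq_zero_of_bot _⟩
  obtain ⟨τ, hτ, -⟩ := hone locConstSheaf isSheaf_locConstSheaf (LocConstSec.const ⊤ 1)
  refine LocConstSec.eq_bot_of_res_const_eq_zero (one_ne_zero : (1 : k) ≠ 0) le_top ?_
  have hnat := τ.natural (le_top : W ≤ ⊤) one
  rw [hτ, h, map_zero] at hnat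
  exact hnat

def zeroLocus (y : F.obj ⊤) : B :=
  sSup {W | F.res (le_top : W ≤ ⊤) y = 0}

theorem IsSheaf.res_zeroLocus (hF : F.IsSheaf) (y : F.obj ⊤) :
    F.res (le_top : F.zeroLocus y ≤ ⊤) y = 0 := by
  obtain ⟨b, hba, hb, hsup⟩ :=
    exists_pairwise_disjoint_iSup_eq fun W : {W | F.res (le_top : W ≤ ⊤) y = 0} => (W : B)
  have hpart : IsPartitionOf (F.zeroLocus y) b := ⟨hb, hsup.trans (sSup_eq_iSup' _).symm⟩
  refine (hF.eq_zero_iff hpart _).2 fun W => ?_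
  rw [F.res_comp, ← F.res_comp (hba W) le_top, W.2, map_zero]

theorem IsSheaf.res_eq_zero_iff_le_zeroLocus (hF : F.IsSheaf) {y : F.obj ⊤} :
    F.res (le_top : W ≤ ⊤) y = 0 ↔ W ≤ F.zeroLocus y :=
  ⟨fun h => le_sSup h, fun h => by rw [← F.res_comp h le_top, hF.res_zeroLocus, map_zero]⟩

end KPresheaf

namespace KHom

open KPresheaf

variable {KX G : KPresheaf B k} {one : KX.obj ⊤}

theorem map_eq_zero_iff (hKX : KX.IsSheaf) (hone : KX.IsFreeOn one) (hG : G.IsSheaf)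
    (φ : KHom KX G) {V : B} (x : KX.obj V) :
    φ.map V x = 0 ↔
      KX.res (inf_le_left : V ⊓ (G.zeroLocus (φ.map ⊤ one))ᶜ ≤ V) x = 0 := by
  set Z := G.zeroLocus (φ.map ⊤ one)
  obtain ⟨ι, a, c, ha, hx⟩ := hone.isLocallyMultiple hKX x
  have hφx : ∀ i, G.res (ha.le i) (φ.map V x) = c i • G.res le_top (φ.map ⊤ one) := fun i => by
    rw [φ.natural, hx, map_smul, ← φ.natural]
  have hxU : ∀ i, KX.res ((ha.inf Zᶜ).le i) (KX.res inf_le_left x) =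
      c i • KX.res le_top one := fun i => by
    rw [KX.res_comp]
    exact res_eq_smul_of_le (ha.le i) (hx i _) inf_le_left
  rw [hG.eq_zero_iff ha, hKX.eq_zero_iff (ha.inf Zᶜ)]
  refine forall_congr' fun i => ?_
  rw [hφx, hxU, smul_eq_zero, smul_eq_zero, hG.res_eq_zero_iff_le_zeroLocus,
    hone.res_eq_zero_iff hKX, ← disjoint_iff, disjoint_compl_right_iff]

theorem eq_compl_zeroLocus (hKX : KX.IsSheaf) (hone : KX.IsFreeOn one) (hG : G.IsSheaf)
    (φ : KHom KX G) {U : B}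
    (hU : ∀ (V : B) (x : KX.obj V), φ.map V x = 0 ↔ KX.res (inf_le_left : V ⊓ U ≤ V) x = 0) :
    U = (G.zeroLocus (φ.map ⊤ one))ᶜ := by
  have hZ : ∀ W, W ≤ G.zeroLocus (φ.map ⊤ one) ↔ W ≤ Uᶜ := fun W => by
    rw [← hG.res_eq_zero_iff_le_zeroLocus, φ.natural, hU, KX.res_comp, hone.res_eq_zero_iff hKX,
      le_compl_iff_disjoint_right, disjoint_iff]
  rw [eq_compl_comm]
  exact le_antisymm ((hZ _).1 le_rfl) ((hZ _).2 le_rfl)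

end KHom

/-- The projection onto `k_U` is recorded by its kernel `k_{X∖U}`: the sections vanishing on `U`. -/
theorem epi_from_unit_is_projection_onto_clopen_general
    (KX : KPresheaf B k) (hKX : KX.IsSheaf) (one : KX.obj ⊤)
    (hone : ∀ G : KPresheaf B k, G.IsSheaf → ∀ y : G.obj ⊤,
      ∃! φ : KHom KX G, φ.map ⊤ one = y)
    (G : KPresheaf B k) (hG : G.IsSheaf) (φ : KHom KX G) :
    ∃! U : B, ∀ (V : B) (x : KX.obj V),
      φ.map V x = 0 ↔ KX.res (inf_le_left : V ⊓ U ≤ V) x = 0 :=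
  ⟨_, fun _ x => φ.map_eq_zero_iff hKX hone hG x, fun _ hU => φ.eq_compl_zeroLocus hKX hone hG hU⟩

/-- Classification of epimorphisms out of the constant sheaf `k_X` on a Boolean
locale: any epimorphism `φ : k_X ↠ G` of sheaves of `k`-vector spaces is, up to
isomorphism under `k_X`, the canonical projection `k_X ≅ k_U ⊕ k_{X∖U} → k_U` for a
unique open `U`. Equivalently (in the abelian category of sheaves), its kernel is
`k_{X∖U}`, the subsheaf of sections vanishing on `U`, for a unique open `U`.

Here `KX` is the constant sheaf `k_X`, characterized by its universal property: it
represents global sections, via the global section `one`. -/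
theorem epi_from_unit_is_projection_onto_clopen
    (KX : KPresheaf B k) (hKX : KX.IsSheaf) (one : KX.obj ⊤)
    (hone : ∀ G : KPresheaf B k, G.IsSheaf → ∀ y : G.obj ⊤,
      ∃! φ : KHom KX G, φ.map ⊤ one = y)
    (G : KPresheaf B k) (hG : G.IsSheaf) (φ : KHom KX G) (hφ : KEpi φ) :
    ∃! U : B, ∀ (V : B) (x : KX.obj V),
      φ.map V x = 0 ↔ KX.res (inf_le_left : V ⊓ U ≤ V) x = 0 :=
  epi_from_unit_is_projection_onto_clopen_general KX hKX one hone G hG φ
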